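/- Let X be a locally convex space such that every maximal monotone operator T : X ⇉ X* is locally bounded on core(conv D(T)). Then X is barreled. -/

import Mathlib

open Topology Set

noncomputable section

variable {X : Type*} [AddCommGroup X] [Module ℝ X] [TopologicalSpace X]

/-- pointwise-bounded subset of the dual -/
def PtwBounded (B : Set (X →L[ℝ] ℝ)) : Prop :=
  ∀ x : X, ∃ M : ℝ, ∀ f ∈ B, |f x| ≤ M

/-- equicontinuous: contained in the polar of a neighborhood of 0 -/
def Equicont (B : Set (X →L[ℝ] ℝ)) : Prop :=
  ∃ V ∈ 𝓝 (0 : X), ∀ f ∈ B, ∀ x ∈ V, |f x| ≤ 1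

variable (X) in
/-- Banach–Steinhaus property -/
def BSProp : Prop := ∀ B : Set (X →L[ℝ] ℝ), PtwBounded B → Equicont B

variable (X) in
/-- the weak topology on X -/
def weakTop : TopologicalSpace X :=
  TopologicalSpace.induced (fun x => fun f : X →L[ℝ] ℝ => f x) inferInstance

def WeaklyClosed (C : Set X) : Prop := @IsClosed X (weakTop X) C

def WeakLSC (f : X → EReal) : Prop := @LowerSemicontinuous X EReal (weakTop X) _ f

/-- algebraic interior -/
def core (A : Set X) : Set X :=
  {a | ∀ x : X, ∃ μ > (0:ℝ), ∀ l : ℝ, 0 ≤ l → l ≤ μ → a + l • x ∈ A}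

/-- Fitzpatrick function of a multifunction given by its graph -/
def fitz (T : Set (X × (X →L[ℝ] ℝ))) (z : X × (X →L[ℝ] ℝ)) : EReal :=
  ⨆ p : T, ((z.2 p.1.1 + p.1.2 z.1 - p.1.2 p.1.1 : ℝ) : EReal)

def fitzDom (T : Set (X × (X →L[ℝ] ℝ))) : Set (X × (X →L[ℝ] ℝ)) :=
  {z | fitz T z < ⊤}

/-- local boundedness of a multifunction at a point -/
def LocBddAt (T : Set (X × (X →L[ℝ] ℝ))) (x₀ : X) : Prop :=
  ∃ U ∈ 𝓝 x₀, Equicont {g | ∃ p ∈ T, p.1 ∈ U ∧ p.2 = g}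

/-- ε-monotone operator -/
def EMonotone (ε : ℝ) (T : Set (X × (X →L[ℝ] ℝ))) : Prop :=
  ∀ p ∈ T, ∀ q ∈ T, -ε ≤ p.2 p.1 - p.2 q.1 - q.2 p.1 + q.2 q.1

/-- ε-maximal monotone operator -/
def MaxEMonotone (ε : ℝ) (T : Set (X × (X →L[ℝ] ℝ))) : Prop :=
  T.Nonempty ∧ EMonotone ε T ∧ ∀ S, EMonotone ε S → T ⊆ S → S = T

/-- support function with values in EReal -/
def sigmaE (B : Set (X →L[ℝ] ℝ)) (x : X) : EReal := ⨆ f : B, ((f.1 x : ℝ) : EReal)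

/-- real-valued support function -/
def sigmaR (B : Set (X →L[ℝ] ℝ)) (x : X) : ℝ := ⨆ f : B, f.1 x

/-- ε-subdifferential of a real-valued function -/
def esubdiff (ε : ℝ) (f : X → ℝ) (x : X) : Set (X →L[ℝ] ℝ) :=
  {g | ∀ x' : X, g (x' - x) + f x ≤ f x' + ε}

/-- convexity for EReal-valued functions -/
def ConvexFnE (f : X → EReal) : Prop :=
  ∀ x y : X, ∀ a b : ℝ, 0 ≤ a → 0 ≤ b → a + b = 1 →
    f (a • x + b • y) ≤ (a : EReal) * f x + (b : EReal) * f y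

/-- proper EReal-valued function -/
def ProperE (f : X → EReal) : Prop := (∃ x, f x < ⊤) ∧ ∀ x, f x ≠ ⊥

variable (X) in
/-- barreledness: every convex closed absorbing set is a neighborhood of 0 -/
def BarrelProp : Prop :=
  ∀ C : Set X, Convex ℝ C → IsClosed C → Absorbent ℝ C → C ∈ 𝓝 (0 : X)

/-!
Given a barrel `C`, its one-sided polar `B` is pointwise bounded above because `C` is absorbing.
Fix a nonzero continuous functional `ℓ`. Gluing `{0} × B` to the part of the graph of the
monotone map `x ↦ ℓ x • ℓ` (the gradient of `ℓ² / 2`) on which it dominates `B` gives a monotone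
operator whose domain contains a ray in every direction off `ker ℓ`, so that `0` lies in the
core of the convex hull of its domain. A maximal monotone extension is then locally bounded at `0`,
which makes `B` equicontinuous, and by the bipolar theorem `C` contains a neighborhood of `0`.
If `X` has no nonzero continuous functional, Hahn–Banach forces `C = X`.
-/

open Filter Pointwise

section Operators

theorem EMonotone.exists_maxEMonotone_superset {ε : ℝ} {S : Set (X × (X →L[ℝ] ℝ))}
    (hne : S.Nonempty) (hS : EMonotone ε S) : ∃ T, MaxEMonotone ε T ∧ S ⊆ T := by
  obtain ⟨T, hST, hT⟩ := zorn_subset_nonempty {S' | EMonotone ε S'}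
    (fun c hc hchain _ => by
      refine ⟨⋃₀ c, ?_, fun s hs => subset_sUnion_of_mem hs⟩
      rintro p ⟨s₁, hs₁, hp⟩ q ⟨s₂, hs₂, hq⟩
      rcases hchain.total hs₁ hs₂ with h12 | h21
      · exact hc hs₂ p (h12 hp) q hq
      · exact hc hs₁ p hp q (h21 hq)) S hS
  exact ⟨T, ⟨hne.mono hST, hT.prop, fun S' hS' hTS' => hT.eq_of_ge hS' hTS'⟩, hST⟩

theorem zero_mem_core_of_forall_exists_smul_mem {E : Type*} [AddCommGroup E] [Module ℝ E]
    {A : Set E} (hA : Convex ℝ A) (h0 : 0 ∈ A) (hray : ∀ x, ∃ t > (0 : ℝ), t • x ∈ A) :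
    (0 : E) ∈ core A := by
  intro x
  obtain ⟨t, ht, hxA⟩ := hray x
  refine ⟨t, ht, fun l hl hlt => ?_⟩
  have hmem := hA.smul_mem_of_zero_mem h0 hxA ⟨div_nonneg hl ht.le, (div_le_one ht).2 hlt⟩
  rwa [smul_smul, div_mul_cancel₀ _ ht.ne', ← zero_add (l • x)] at hmem

theorem LocBddAt.equicont_of_singleton_prod_subset {T : Set (X × (X →L[ℝ] ℝ))} {x₀ : X}
    {B : Set (X →L[ℝ] ℝ)} (hT : LocBddAt T x₀) (hBT : {x₀} ×ˢ B ⊆ T) : Equicont B := by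
  obtain ⟨U, hU, V, hV, hbd⟩ := hT
  exact ⟨V, hV, fun f hf => hbd f ⟨(x₀, f), hBT ⟨rfl, hf⟩, mem_of_mem_nhds hU, rfl⟩⟩

def zeroProdExtension (ℓ : X →L[ℝ] ℝ) (B : Set (X →L[ℝ] ℝ)) : Set (X × (X →L[ℝ] ℝ)) :=
  {0} ×ˢ B ∪ {p | p.2 = ℓ p.1 • ℓ ∧ ∀ f ∈ B, f p.1 ≤ ℓ p.1 * ℓ p.1}

variable (ℓ : X →L[ℝ] ℝ) (B : Set (X →L[ℝ] ℝ))

theorem emonotone_zeroProdExtension : EMonotone 0 (zeroProdExtension ℓ B) := by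
  rintro ⟨x, f⟩ hp ⟨y, g⟩ hq
  simp only [zeroProdExtension, mem_union, mem_prod, mem_singleton_iff, mem_ofPred_eq] at hp hq
  rcases hp with ⟨rfl, hf⟩ | ⟨rfl, hxB⟩ <;> rcases hq with ⟨rfl, hg⟩ | ⟨rfl, hyB⟩
  · simp
  · simpa using hyB f hf
  · simpa using hxB g hg
  · simp only [smul_apply, smul_eq_mul, neg_zero]
    nlinarith [sq_nonneg (ℓ x - ℓ y)]

theorem eventually_smul_mem_fst_zeroProdExtension {x : X} (hB : ∃ M, ∀ f ∈ B, f x ≤ M)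
    (hx : ℓ x ≠ 0) : ∀ᶠ t : ℝ in atTop, t • x ∈ Prod.fst '' zeroProdExtension ℓ B := by
  obtain ⟨M, hM⟩ := hB
  have hgrow : Tendsto (fun t : ℝ => t * (ℓ x * ℓ x)) atTop atTop :=
    tendsto_id.atTop_mul_const (mul_self_pos.2 hx)
  filter_upwards [eventually_ge_atTop (0 : ℝ), hgrow.eventually_ge_atTop M] with t ht htM
  refine ⟨(t • x, ℓ (t • x) • ℓ), Or.inr ⟨rfl, fun f hf => ?_⟩, rfl⟩
  simp only [map_smul, smul_eq_mul]
  nlinarith [hM f hf]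

theorem exists_pos_smul_mem_convexHull_fst_zeroProdExtension (hℓ : ℓ ≠ 0)
    (hB : ∀ x, ∃ M, ∀ f ∈ B, f x ≤ M) (x : X) :
    ∃ t > (0 : ℝ), t • x ∈ convexHull ℝ (Prod.fst '' zeroProdExtension ℓ B) := by
  set D := Prod.fst '' zeroProdExtension ℓ B
  have hray := fun y => eventually_smul_mem_fst_zeroProdExtension ℓ B (hB y)
  obtain ⟨e, he⟩ : ∃ e, ℓ e ≠ 0 := by
    by_contra! h
    exact hℓ (ContinuousLinearMap.ext h)
  by_cases hx : ℓ x = 0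
  · -- `t • x` is the midpoint of `t • (x + e)` and `t • (x - e)`, both off `ker ℓ`.
    obtain ⟨t, ⟨ht₁, ht₂⟩, ht⟩ :=
      (((hray (x + e) (by simp [hx, he])).and (hray (x - e) (by simp [hx, he]))).and
        (eventually_gt_atTop 0)).exists
    have hmid := convex_convexHull ℝ D (subset_convexHull ℝ D ht₁) (subset_convexHull ℝ D ht₂)
      (by norm_num : (0 : ℝ) ≤ 1 / 2) (by norm_num : (0 : ℝ) ≤ 1 / 2) (by norm_num)
    refine ⟨t, ht, ?_⟩
    convert hmid using 1
    module
  · obtain ⟨t, hxt, ht⟩ := ((hray x hx).and (eventually_gt_atTop 0)).exists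
    exact ⟨t, ht, subset_convexHull ℝ D hxt⟩

theorem exists_maxEMonotone_singleton_prod_subset {ℓ : X →L[ℝ] ℝ} (hℓ : ℓ ≠ 0)
    (hB : ∀ x, ∃ M, ∀ f ∈ B, f x ≤ M) :
    ∃ T, MaxEMonotone 0 T ∧ {0} ×ˢ B ⊆ T ∧ (0 : X) ∈ core (convexHull ℝ (Prod.fst '' T)) := by
  have hzero : ((0 : X), (0 : X →L[ℝ] ℝ)) ∈ zeroProdExtension ℓ B := Or.inr ⟨by simp, by simp⟩
  obtain ⟨T, hT, hST⟩ :=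
    (emonotone_zeroProdExtension ℓ B).exists_maxEMonotone_superset ⟨_, hzero⟩
  have hdom : convexHull ℝ (Prod.fst '' zeroProdExtension ℓ B) ⊆
      convexHull ℝ (Prod.fst '' T) := convexHull_mono (image_mono hST)
  refine ⟨T, hT, subset_union_left.trans hST, ?_⟩
  refine zero_mem_core_of_forall_exists_smul_mem (convex_convexHull ℝ _)
    (subset_convexHull ℝ _ ⟨_, hST hzero, rfl⟩) fun x => ?_
  obtain ⟨t, ht, hxt⟩ := exists_pos_smul_mem_convexHull_fst_zeroProdExtension ℓ B hℓ hB x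
  exact ⟨t, ht, hdom hxt⟩

end Operators

section Polar

def oneSidedPolar (C : Set X) : Set (X →L[ℝ] ℝ) := {f | ∀ y ∈ C, f y ≤ 1}

theorem Absorbent.exists_forall_oneSidedPolar_le {C : Set X} (hC : Absorbent ℝ C) (x : X) :
    ∃ M, ∀ f ∈ oneSidedPolar C, f x ≤ M := by
  obtain ⟨r, hr⟩ := absorbs_iff_norm.1 (hC x)
  set R := max r 1
  obtain ⟨y, hyC, rfl⟩ : x ∈ R • C := hr R (by simp [R, abs_of_pos]) rfl
  refine ⟨R, fun f hf => ?_⟩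
  calc f (R • y) = R * f y := by rw [map_smul, smul_eq_mul]
    _ ≤ R * 1 := mul_le_mul_of_nonneg_left (hf y hyC) (by positivity)
    _ = R := mul_one R

variable [IsTopologicalAddGroup X] [ContinuousSMul ℝ X] [LocallyConvexSpace ℝ X]

theorem Convex.mem_of_forall_oneSidedPolar_le_one {C : Set X} (hconv : Convex ℝ C)
    (hclosed : IsClosed C) (h0 : (0 : X) ∈ C) {x : X}
    (hx : ∀ f ∈ oneSidedPolar C, f x ≤ 1) : x ∈ C := by
  by_contra hxC
  obtain ⟨g, u, hgC, hgx⟩ := geometric_hahn_banach_closed_point hconv hclosed hxC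
  have hu : 0 < u := by simpa using hgC 0 h0
  have hpolar : u⁻¹ • g ∈ oneSidedPolar C := fun y hy => by
    simpa [inv_mul_le_one₀ hu] using (hgC y hy).le
  have := hx _ hpolar
  simp only [smul_apply, smul_eq_mul, inv_mul_le_one₀ hu] at this
  linarith

theorem Convex.mem_nhds_zero_of_equicont_oneSidedPolar {C : Set X} (hconv : Convex ℝ C)
    (hclosed : IsClosed C) (h0 : (0 : X) ∈ C) (hC : Equicont (oneSidedPolar C)) :
    C ∈ 𝓝 (0 : X) := by
  obtain ⟨V, hV, hbd⟩ := hC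
  exact mem_of_superset hV fun x hx =>
    hconv.mem_of_forall_oneSidedPolar_le_one hclosed h0 fun f hf => (abs_le.1 (hbd f hf x hx)).2

end Polar

theorem stmt15 [IsTopologicalAddGroup X] [ContinuousSMul ℝ X] [LocallyConvexSpace ℝ X]
    (h : ∀ T : Set (X × (X →L[ℝ] ℝ)), MaxEMonotone 0 T →
      ∀ x ∈ core (convexHull ℝ (Prod.fst '' T)), LocBddAt T x) :
    BarrelProp X := by
  intro C hconv hclosed habs
  refine hconv.mem_nhds_zero_of_equicont_oneSidedPolar hclosed habs.zero_mem ?_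
  by_cases hX : ∃ ℓ : X →L[ℝ] ℝ, ℓ ≠ 0
  · obtain ⟨ℓ, hℓ⟩ := hX
    obtain ⟨T, hT, hBT, hcore⟩ :=
      exists_maxEMonotone_singleton_prod_subset _ hℓ habs.exists_forall_oneSidedPolar_le
    exact (h T hT 0 hcore).equicont_of_singleton_prod_subset hBT
  · push Not at hX
    exact ⟨univ, univ_mem, fun f _ x _ => by simp [hX f]⟩
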